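/- arXiv:1911.02763 — 5 statements merged into one kernel-verified Lean document; each statement's English description precedes it below -/
import Mathlib

section
/- Let G be a finite group with |G| > 2. The prime coprime graph Θ(G) is Eulerian (i.e., it admits a closed trail traversing every edge exactly once) if and only if |G| is odd and every non-identity element of G has prime order. -/
open Classical

/-- The prime coprime graph of a (multiplicative) group: two distinct vertices are
adjacent iff the gcd of their orders is `1` or a prime. -/
def pcGraph (G : Type*) [Group G] : SimpleGraph G where
  Adj x y := x ≠ y ∧
    (Nat.gcd (orderOf x) (orderOf y) = 1 ∨ (Nat.gcd (orderOf x) (orderOf y)).Prime)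
  symm := by
    constructor
    rintro x y ⟨hxy, h⟩
    exact ⟨hxy.symm, by rwa [Nat.gcd_comm]⟩
  loopless := ⟨fun x h => h.1 rfl⟩

/-!
An Eulerian graph has only even degrees. The identity is adjacent to every other element, so
`|G|` is odd. If `o(x)` is neither `1` nor prime, the neighbourhood of `x` consists of the `y`
with `gcd(o(x), o(y))` equal to `1` or a prime; it contains `1` and is closed under inversion,
and in a group of odd order inversion fixes only `1`, so `deg x` is odd.

Conversely, if every nontrivial element has prime order, two distinct orders are either coprime
or equal primes, so `Θ(G)` is the complete graph on an odd number of vertices. `K_n` with `n` odd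
has an Euler circuit by induction on `n`: removing two vertices `a, b` leaves `K_{n-2}`, and the
removed edges form one closed trail `a → x₁ → b → y₁ → a → x₂ → b → y₂ → a → ⋯ → z → b → a`
through the remaining vertices, which is spliced into the circuit of `K_{n-2}`.
-/

open SimpleGraph Finset

theorem odd_card_erase_erase {α : Type*} [DecidableEq α] {s : Finset α} {a b : α} (ha : a ∈ s)
    (hb : b ∈ s) (hab : a ≠ b) : Odd #((s.erase a).erase b) ↔ Odd #s := by
  rw [← card_erase_add_one ha, ← card_erase_add_one (mem_erase.2 ⟨hab.symm, hb⟩), add_assoc,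
    Nat.odd_add]
  simp

section CompleteGraph

variable {V : Type*} [DecidableEq V]

theorem exists_closed_trail_pair_join {a b : V} (hab : a ≠ b)
    (S : Finset V) (ha : a ∉ S) (hb : b ∉ S) (hS : Odd #S) :
    ∃ p : (⊤ : SimpleGraph V).Walk a a, p.IsTrail ∧
      ∀ e, e ∈ p.edges ↔ e = s(a, b) ∨ ∃ x ∈ S, e = s(a, x) ∨ e = s(b, x) := by
  induction S using Finset.strongInduction with | H S ih => ?_
  obtain hS1 | hS3 : #S = 1 ∨ 1 < #S := by obtain ⟨k, hk⟩ := hS; omega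
  · obtain ⟨x, rfl⟩ := card_eq_one.mp hS1
    have hxa : x ≠ a := by rintro rfl; simp at ha
    have hxb : x ≠ b := by rintro rfl; simp at hb
    refine ⟨.cons hxa.symm (.cons hxb (.cons hab.symm .nil)), ?_, fun e => ?_⟩
    · simp [hab, hab.symm, hxa, hxa.symm, hxb]
    · simp only [Walk.edges_cons, Walk.edges_nil, List.mem_cons, List.not_mem_nil, or_false,
        mem_singleton, exists_eq_left, Sym2.eq_swap (a := b) (b := a),
        Sym2.eq_swap (a := x) (b := b)]
      tauto
  · obtain ⟨x, hx, y, hy, hxy⟩ := one_lt_card.mp hS3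
    have hxa : x ≠ a := by rintro rfl; exact ha hx
    have hxb : x ≠ b := by rintro rfl; exact hb hx
    have hya : y ≠ a := by rintro rfl; exact ha hy
    have hyb : y ≠ b := by rintro rfl; exact hb hy
    set S' := (S.erase x).erase y
    have hS' : S' ⊂ S := (erase_ssubset (mem_erase.2 ⟨hxy.symm, hy⟩)).trans (erase_ssubset hx)
    obtain ⟨p, hp, hpe⟩ := ih S' hS' (fun h => ha (mem_of_mem_erase (mem_of_mem_erase h)))
      (fun h => hb (mem_of_mem_erase (mem_of_mem_erase h))) ((odd_card_erase_erase hx hy hxy).2 hS)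
    refine ⟨.cons hxa.symm (.cons hxb (.cons hyb.symm (.cons hya p))), ?_, fun e => ?_⟩
    · simp [hp, hpe, S', hab, hab.symm, hxa, hxa.symm, hxb, hya, hya.symm, hyb, hyb.symm, hxy,
        hxy.symm]
    · have hSxy : ∀ z, z ∈ S ↔ z = x ∨ z = y ∨ z ∈ S' := fun z => by
        by_cases hzx : z = x <;> by_cases hzy : z = y <;> simp [S', *]
      simp only [Walk.edges_cons, List.mem_cons, hpe, hSxy, or_and_right, exists_or,
        exists_eq_left, Sym2.eq_swap (a := x) (b := b), Sym2.eq_swap (a := y) (b := a)]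
      grind

theorem exists_closed_trail_complete_on (S : Finset V) (hS : Odd #S) :
    ∃ u ∈ S, ∃ p : (⊤ : SimpleGraph V).Walk u u, p.IsTrail ∧
      ∀ e, e ∈ p.edges ↔ ¬ e.IsDiag ∧ e ∈ S.sym2 := by
  induction S using Finset.strongInduction with | H S ih => ?_
  obtain hS1 | hS3 : #S = 1 ∨ 1 < #S := by obtain ⟨k, hk⟩ := hS; omega
  · obtain ⟨u, rfl⟩ := card_eq_one.mp hS1
    refine ⟨u, mem_singleton_self u, .nil, .nil, fun e => ?_⟩
    induction e using Sym2.ind with | _ x y => ?_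
    simp only [Walk.edges_nil, List.not_mem_nil, false_iff, not_and, mem_sym2_iff, mem_singleton,
      Sym2.mk_isDiag_iff]
    exact fun hxy h => hxy ((h x (Sym2.mem_mk_left x y)).trans (h y (Sym2.mem_mk_right x y)).symm)
  · obtain ⟨a, ha, b, hb, hab⟩ := one_lt_card.mp hS3
    set S' := (S.erase a).erase b
    have hS' : S' ⊂ S := (erase_ssubset (mem_erase.2 ⟨hab.symm, hb⟩)).trans (erase_ssubset ha)
    have hS'odd : Odd #S' := (odd_card_erase_erase ha hb hab).2 hS
    have haS' : a ∉ S' := fun h => (mem_erase.1 (mem_of_mem_erase h)).1 rfl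
    have hbS' : b ∉ S' := fun h => (mem_erase.1 h).1 rfl
    obtain ⟨u, hu, p, hp, hpe⟩ := ih S' hS' hS'odd
    obtain ⟨z, hz, hze⟩ := exists_closed_trail_pair_join hab S' haS' hbS' hS'odd
    have huz : u ∈ z.support :=
      z.snd_mem_support_of_mem_edges ((hze _).2 (Or.inr ⟨u, hu, Or.inl rfl⟩))
    refine ⟨u, mem_of_mem_erase (mem_of_mem_erase hu), p.append (z.rotate u huz), ?_,
      fun e => ?_⟩
    · have hdisj : p.edges.Disjoint z.edges := by
        rintro e hep hez
        obtain ⟨-, he⟩ := (hpe e).1 hep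
        rw [mem_sym2_iff] at he
        rcases (hze e).1 hez with rfl | ⟨x, -, rfl | rfl⟩
        · exact haS' (he a (Sym2.mem_mk_left a b))
        · exact haS' (he a (Sym2.mem_mk_left a x))
        · exact hbS' (he b (Sym2.mem_mk_left b x))
      exact (Walk.isTrail_append _ _).2 ⟨hp, (Walk.isTrail_rotate huz).2 hz,
        fun _ hep hez => hdisj hep ((z.rotate_edges u huz).perm.subset hez)⟩
    · induction e using Sym2.ind with | _ x y => ?_
      rw [Walk.edges_append, List.mem_append, (z.rotate_edges u huz).perm.mem_iff, hpe, hze]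
      simp only [mem_sym2_iff, Sym2.mem_iff, forall_eq_or_imp, forall_eq, Sym2.mk_isDiag_iff,
        Sym2.eq_iff, S', mem_erase]
      clear ih hpe hze
      grind

theorem exists_isEulerian_top [Fintype V] (hV : Odd (Fintype.card V)) :
    ∃ (u : V) (p : (⊤ : SimpleGraph V).Walk u u), p.IsEulerian := by
  obtain ⟨u, -, p, hp, hpe⟩ := exists_closed_trail_complete_on (univ : Finset V) hV
  exact ⟨u, p, hp.isEulerian_of_forall_mem fun e he =>
    (hpe e).2 ⟨not_isDiag_of_mem_edgeSet _ he, by simp⟩⟩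

end CompleteGraph

theorem even_card_of_involution {α : Type*} (s : Finset α) (f : α → α)
    (hf : ∀ a ∈ s, f a ∈ s) (hfix : ∀ a ∈ s, f a ≠ a) (hinv : ∀ a ∈ s, f (f a) = a) : Even #s := by
  have : ∑ _a ∈ s, (1 : ZMod 2) = 0 :=
    sum_involution (fun a _ => f a) (fun _ _ => by decide) (fun a ha _ => hfix a ha) hf hinv
  simpa [ZMod.natCast_eq_zero_iff_even] using this

section Group

variable {G : Type*} [Group G]

theorem pcGraph_adj_one {x : G} (hx : x ≠ 1) : (pcGraph G).Adj 1 x :=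
  ⟨hx.symm, Or.inl (by simp)⟩

theorem pcGraph_eq_top_of_forall_orderOf_prime (h : ∀ x : G, x ≠ 1 → (orderOf x).Prime) :
    pcGraph G = ⊤ := by
  ext x y
  refine ⟨And.left, fun hxy => ⟨hxy, ?_⟩⟩
  rcases eq_or_ne x 1 with rfl | hx
  · simp
  rcases eq_or_ne y 1 with rfl | hy
  · simp
  rcases eq_or_ne (orderOf x) (orderOf y) with hxy | hxy
  · exact Or.inr (by simpa [hxy] using h y hy)
  · exact Or.inl ((Nat.coprime_primes (h x hx) (h y hy)).2 hxy)

theorem pcGraph_degree_one [Fintype G] [DecidableRel (pcGraph G).Adj] :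
    (pcGraph G).degree 1 = Fintype.card G - 1 := by
  rw [← card_neighborFinset_eq_degree,
    show (pcGraph G).neighborFinset 1 = univ.erase 1 by
      ext x
      simpa using ⟨fun h => h.ne', pcGraph_adj_one⟩,
    card_erase_of_mem (mem_univ 1), card_univ]

theorem eq_one_of_inv_eq_self_of_odd_card [Fintype G] (hG : Odd (Fintype.card G)) {x : G}
    (hx : x⁻¹ = x) : x = 1 := by
  have hsq : x ^ 2 = 1 := by rw [sq, ← inv_eq_iff_mul_eq_one, hx]
  exact orderOf_eq_one_iff.1 <| Nat.eq_one_of_dvd_coprimes (Nat.coprime_two_left.2 hG)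
    (orderOf_dvd_of_pow_eq_one hsq) orderOf_dvd_card

theorem odd_card_of_inv_mem [Fintype G] (hG : Odd (Fintype.card G)) {s : Finset G}
    (h1 : 1 ∈ s) (hinv : ∀ x ∈ s, x⁻¹ ∈ s) : Odd #s := by
  have heven : Even #(s.erase 1) := even_card_of_involution (s.erase 1) (·⁻¹)
    (fun x hx => mem_erase.2 ⟨inv_ne_one.2 (ne_of_mem_erase hx), hinv x (mem_of_mem_erase hx)⟩)
    (fun x hx h => ne_of_mem_erase hx (eq_one_of_inv_eq_self_of_odd_card hG h))
    (fun x _ => inv_inv x)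
  rw [← card_erase_add_one h1]
  exact heven.add_one

theorem odd_degree_pcGraph_of_not_prime [Fintype G] [DecidableRel (pcGraph G).Adj]
    (hG : Odd (Fintype.card G)) {x : G} (hx1 : x ≠ 1) (hx : ¬ (orderOf x).Prime) :
    Odd ((pcGraph G).degree x) := by
  have hadj (y : G) : (pcGraph G).Adj x y ↔
      Nat.gcd (orderOf x) (orderOf y) = 1 ∨ (Nat.gcd (orderOf x) (orderOf y)).Prime := by
    refine ⟨And.right, fun h => ⟨?_, h⟩⟩
    rintro rfl
    rw [Nat.gcd_self, orderOf_eq_one_iff] at h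
    exact h.elim hx1 hx
  rw [← card_neighborFinset_eq_degree]
  exact odd_card_of_inv_mem hG (by simpa using (pcGraph_adj_one hx1).symm)
    (fun y hy => by simpa [hadj, orderOf_inv] using hy)

end Group

theorem pcGraph_eulerian_iff_general (G : Type*) [Group G] [Finite G] :
    (∃ (v : G) (p : (pcGraph G).Walk v v), p.IsEulerian) ↔
      (Odd (Nat.card G) ∧ ∀ x : G, x ≠ 1 → (orderOf x).Prime) := by
  have := Fintype.ofFinite G
  rw [Nat.card_eq_fintype_card]
  constructor
  · rintro ⟨v, p, hp⟩
    have heven (x : G) : Even ((pcGraph G).degree x) := hp.even_degree_iff.2 (absurd rfl)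
    have hodd : Odd (Fintype.card G) := by
      have := heven 1
      rw [pcGraph_degree_one] at this
      obtain ⟨k, hk⟩ := this
      exact ⟨k, by have := Fintype.card_pos (α := G); omega⟩
    exact ⟨hodd, fun x hx1 => by_contra fun hx =>
      Nat.not_even_iff_odd.2 (odd_degree_pcGraph_of_not_prime hodd hx1 hx) (heven x)⟩
  · rintro ⟨hodd, hprime⟩
    rw [pcGraph_eq_top_of_forall_orderOf_prime hprime]
    exact exists_isEulerian_top hodd

/-- For a finite group G with |G| > 2, the prime coprime graph Θ(G) is Eulerian
iff |G| is odd and every non-identity element of G has prime order. -/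
theorem pcGraph_eulerian_iff (G : Type*) [Group G] [Finite G] (hG : 2 < Nat.card G) :
    (∃ (v : G) (p : (pcGraph G).Walk v v), p.IsEulerian) ↔
      (Odd (Nat.card G) ∧ ∀ x : G, x ≠ 1 → (orderOf x).Prime) :=
  pcGraph_eulerian_iff_general G
end

section
/- Let n ≥ 2 be a natural number and let D_n denote the dihedral group of order 2n. The prime coprime graph Θ(D_n) is a complete graph if and only if n is a prime number. -/
/-! If every element has order `1` or a prime, then the graph is complete, since the gcd of
such an order with anything is again `1` or that order. Conversely, `x` and `x⁻¹` have the same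
order, so completeness forces the order of every non-involution to be prime. In `D_n` the
rotation `r 1` has order `n`, and for prime `n` every element has order `1`, `2` or `n`. -/

theorem Nat.gcd_eq_one_or_prime_of_left {a : ℕ} (ha : a = 1 ∨ a.Prime) (b : ℕ) :
    a.gcd b = 1 ∨ (a.gcd b).Prime := by
  rcases ha with rfl | ha
  · exact Or.inl (Nat.gcd_one_left b)
  · rcases ha.eq_one_or_self_of_dvd _ (Nat.gcd_dvd_left a b) with h | h
    · exact Or.inl h
    · exact Or.inr (by rwa [h])

namespace pcGraph

variable {G : Type*} [Group G]

theorem eq_top_of_forall_orderOf (h : ∀ x : G, orderOf x = 1 ∨ (orderOf x).Prime) :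
    pcGraph G = ⊤ := by
  ext x y
  exact ⟨fun hxy => hxy.1, fun hxy => ⟨hxy, Nat.gcd_eq_one_or_prime_of_left (h x) _⟩⟩

theorem orderOf_dvd_two_or_prime_of_eq_top (h : pcGraph G = ⊤) (x : G) :
    orderOf x ∣ 2 ∨ (orderOf x).Prime := by
  by_cases hx : x⁻¹ = x
  · exact Or.inl (orderOf_dvd_of_pow_eq_one (by rw [sq, ← inv_eq_iff_mul_eq_one, hx]))
  have hadj : (pcGraph G).Adj x⁻¹ x := by rw [h]; exact hx
  obtain ⟨-, hgcd⟩ := hadj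
  rw [orderOf_inv, Nat.gcd_self] at hgcd
  exact hgcd.imp (fun h1 => by rw [h1]; exact one_dvd 2) id

end pcGraph

namespace DihedralGroup

theorem orderOf_eq_one_or_prime {p : ℕ} (hp : p.Prime) (x : DihedralGroup p) :
    orderOf x = 1 ∨ (orderOf x).Prime := by
  have : NeZero p := ⟨hp.ne_zero⟩
  cases x with
  | r i =>
    rw [orderOf_r]
    rcases hp.eq_one_or_self_of_dvd _ (Nat.gcd_dvd_left p i.val) with h | h
    · exact Or.inr (by rwa [h, Nat.div_one])
    · exact Or.inl (by rw [h, Nat.div_self hp.pos])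
  | sr i => exact Or.inr (orderOf_sr i ▸ Nat.prime_two)

end DihedralGroup

/-- For n ≥ 2, the prime coprime graph of the dihedral group of order 2n is complete
iff n is prime. -/
theorem pcGraph_dihedral_complete_iff (n : ℕ) (hn : 2 ≤ n) :
    pcGraph (DihedralGroup n) = ⊤ ↔ n.Prime := by
  refine ⟨fun h => ?_, fun hp => pcGraph.eq_top_of_forall_orderOf
    (DihedralGroup.orderOf_eq_one_or_prime hp)⟩
  have hr := pcGraph.orderOf_dvd_two_or_prime_of_eq_top h (DihedralGroup.r 1)
  rw [DihedralGroup.orderOf_r_one] at hr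
  rcases hr with h2 | hp
  · rw [le_antisymm (Nat.le_of_dvd two_pos h2) hn]
    exact Nat.prime_two
  · exact hp
end

section
/- Let p and q be distinct primes with p < q. The prime coprime graph Θ(ℤ_{pq}) of the cyclic group of order pq is Hamiltonian if and only if p = 2. -/
/-!
If `p` is odd, the `φ(pq) = (p - 1)(q - 1)` generators of `ℤ/pq` pairwise have orders with gcd
`pq`, neither `1` nor prime, so they form an independent set. Along a Hamiltonian cycle every
vertex of an independent set is followed by a vertex outside it, so an independent set covers at
most half of the vertices; but `2(p - 1)(q - 1) > pq` once `3 ≤ p < q`.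
If `p = 2`, one of `x` and `x + 1` is even, hence has order dividing the prime `q`, so consecutive
residues are adjacent and `0, 1, …, 2q - 1` is a Hamiltonian cycle.
-/

/-- The prime coprime graph of an additive group: two distinct vertices are
adjacent iff the gcd of their (additive) orders is `1` or a prime. -/
def pcGraphAdd (G : Type*) [AddGroup G] : SimpleGraph G where
  Adj x y := x ≠ y ∧
    (Nat.gcd (addOrderOf x) (addOrderOf y) = 1 ∨ (Nat.gcd (addOrderOf x) (addOrderOf y)).Prime)
  symm := by
    constructor
    rintro x y ⟨hxy, h⟩
    exact ⟨hxy.symm, by rwa [Nat.gcd_comm]⟩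
  loopless := ⟨fun x h => h.1 rfl⟩

open Finset Nat

namespace SimpleGraph

variable {α : Type*} [Fintype α] [DecidableEq α] {G : SimpleGraph α}

lemma Walk.IsHamiltonian.countP_support {a b : α} {p : G.Walk a b}
    (hp : p.IsHamiltonian) (P : α → Prop) [DecidablePred P] :
    p.support.countP (P ·) = #{x | P x} := by
  rw [List.countP_eq_length_filter,
    ← List.toFinset_card_of_nodup (hp.isPath.support_nodup.filter _), List.toFinset_filter,
    hp.toFinset_support]
  simp only [decide_eq_true_eq]

lemma Walk.IsHamiltonianCycle.countP_support_tail {a : α} {p : G.Walk a a}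
    (hp : p.IsHamiltonianCycle) (P : α → Prop) [DecidablePred P] :
    p.support.tail.countP (P ·) = #{x | P x} := by
  rw [← Walk.support_tail_of_not_nil _ hp.isCycle.not_nil]
  exact hp.isHamiltonian_tail.countP_support P

lemma Walk.IsHamiltonianCycle.reverse {a : α} {p : G.Walk a a} (hp : p.IsHamiltonianCycle) :
    p.reverse.IsHamiltonianCycle :=
  Walk.isHamiltonianCycle_iff_isCycle_and_length_eq.2
    ⟨hp.isCycle.reverse, by rw [Walk.length_reverse, hp.length_eq]⟩

lemma Walk.IsHamiltonianCycle.card_le_card_compl_of_isIndepSet {a : α}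
    {p : G.Walk a a} (hp : p.IsHamiltonianCycle) {s : Finset α} (hs : G.IsIndepSet s) :
    #s ≤ #sᶜ := by
  have hfst : p.darts.countP (fun d => d.fst ∈ s) = #s := by
    have := hp.reverse.countP_support_tail (· ∈ s)
    rw [← Walk.map_snd_darts, Walk.darts_reverse, List.map_reverse, List.countP_reverse,
      List.map_map, List.countP_map] at this
    simpa [Function.comp_def] using this
  have hsnd : p.darts.countP (fun d => d.snd ∉ s) = #sᶜ := by
    have := hp.countP_support_tail (· ∉ s)
    rw [← Walk.map_snd_darts, List.countP_map, filter_notMem_eq_sdiff, ← compl_eq_univ_sdiff]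
      at this
    simpa [Function.comp_def] using this
  rw [← hfst, ← hsnd]
  refine List.countP_mono_left fun d _ hd => ?_
  simp only [decide_eq_true_eq] at hd ⊢
  exact fun hd' => hs hd hd' (G.ne_of_adj d.adj) d.adj

lemma IsHamiltonian.card_le_card_compl_of_isIndepSet (hG : G.IsHamiltonian)
    (hcard : Fintype.card α ≠ 1) {s : Finset α} (hs : G.IsIndepSet s) : #s ≤ #sᶜ :=
  let ⟨_, _, hp⟩ := hG hcard
  hp.card_le_card_compl_of_isIndepSet hs

lemma cycleGraph_isHamiltonian (n : ℕ) : (cycleGraph (n + 3)).IsHamiltonian := fun _ =>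
  ⟨0, cycleGraph.cycle n,
    Walk.isHamiltonianCycle_iff_isCycle_and_length_eq.2 ⟨cycleGraph.isCycle_cycle, by simp⟩⟩

end SimpleGraph

open SimpleGraph

-- `ZMod (m + 3)` is `Fin (m + 3)` by definition, so `cycleGraph (m + 3)` is a graph on it.
lemma ZMod.isHamiltonian_of_forall_adj_add_one {n : ℕ} [NeZero n] (hn : 3 ≤ n)
    {G : SimpleGraph (ZMod n)} (hG : ∀ x, G.Adj x (x + 1)) : G.IsHamiltonian := by
  obtain ⟨m, rfl⟩ : ∃ m, n = m + 3 := ⟨n - 3, by omega⟩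
  refine (cycleGraph_isHamiltonian m).mono fun x y hxy => ?_
  rcases cycleGraph_adj.1 hxy with h | h
  · convert (hG y).symm using 1
    exact eq_add_of_sub_eq' h
  · convert hG x using 1
    exact eq_add_of_sub_eq' h

lemma ZMod.addOrderOf_intCast_two_mul_dvd (q : ℕ) (m : ℤ) :
    addOrderOf ((2 * m : ℤ) : ZMod (2 * q)) ∣ q := by
  rw [addOrderOf_dvd_iff_nsmul_eq_zero, nsmul_eq_mul]
  calc (q : ZMod (2 * q)) * ((2 * m : ℤ) : ZMod (2 * q))
      = ((2 * q : ℕ) : ZMod (2 * q)) * m := by push_cast; ring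
    _ = 0 := by rw [ZMod.natCast_self, zero_mul]

lemma ZMod.addOrderOf_dvd_or_addOrderOf_add_one_dvd (q : ℕ) (x : ZMod (2 * q)) :
    addOrderOf x ∣ q ∨ addOrderOf (x + 1) ∣ q := by
  obtain ⟨k, rfl⟩ := ZMod.intCast_surjective x
  obtain ⟨m, rfl | rfl⟩ := Int.even_or_odd' k
  · exact Or.inl (addOrderOf_intCast_two_mul_dvd q m)
  · right
    convert addOrderOf_intCast_two_mul_dvd q (m + 1) using 2
    push_cast
    ring

lemma Nat.mul_lt_two_mul_totient_mul {p q : ℕ} (hp : p.Prime) (hq : q.Prime) (hp₃ : 3 ≤ p)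
    (hpq : p < q) : p * q < 2 * φ (p * q) := by
  have hq₅ : 5 ≤ q := by
    have : q ≠ 4 := by rintro rfl; norm_num at hq
    omega
  rw [totient_mul ((coprime_primes hp hq).2 hpq.ne), totient_prime hp, totient_prime hq]
  obtain ⟨a, rfl⟩ : ∃ a, p = a + 3 := ⟨p - 3, by omega⟩
  obtain ⟨b, rfl⟩ : ∃ b, q = b + 5 := ⟨q - 5, by omega⟩
  rw [show a + 3 - 1 = a + 2 by omega, show b + 5 - 1 = b + 4 by omega]
  nlinarith

section pcGraphAdd

variable {G : Type*} [AddGroup G]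

lemma pcGraphAdd_isIndepSet_setOf_addOrderOf_eq {n : ℕ} (hn₁ : n ≠ 1) (hn : ¬ n.Prime) :
    (pcGraphAdd G).IsIndepSet {x | addOrderOf x = n} := by
  rintro x (hx : addOrderOf x = n) y (hy : addOrderOf y = n) - ⟨-, hxy⟩
  rw [hx, hy, Nat.gcd_self] at hxy
  exact hxy.elim hn₁ hn

lemma pcGraphAdd_adj_of_addOrderOf_dvd_prime {q : ℕ} (hq : q.Prime) {x y : G}
    (hx : addOrderOf x ∣ q) (hxy : x ≠ y) : (pcGraphAdd G).Adj x y := by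
  refine ⟨hxy, ?_⟩
  rcases hq.eq_one_or_self_of_dvd _ ((Nat.gcd_dvd_left _ _).trans hx) with h | h
  · exact Or.inl h
  · exact Or.inr (h ▸ hq)

end pcGraphAdd

lemma pcGraphAdd_zmod_not_isHamiltonian_of_lt_two_mul_totient {n : ℕ} [NeZero n] (hn₁ : n ≠ 1)
    (hn : ¬ n.Prime) (htot : n < 2 * φ n) : ¬ (pcGraphAdd (ZMod n)).IsHamiltonian := by
  intro hG
  have hgen := hG.card_le_card_compl_of_isIndepSet (by rwa [ZMod.card])
    (s := {x | addOrderOf x = n})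
    (by simpa using pcGraphAdd_isIndepSet_setOf_addOrderOf_eq hn₁ hn)
  rw [card_compl, ZMod.card, IsAddCyclic.card_addOrderOf_eq_totient (by rw [ZMod.card])] at hgen
  omega

lemma pcGraphAdd_zmod_two_mul_isHamiltonian {q : ℕ} (hq : q.Prime) [NeZero (2 * q)] :
    (pcGraphAdd (ZMod (2 * q))).IsHamiltonian := by
  have : Fact (1 < 2 * q) := ⟨by linarith [hq.two_le]⟩
  refine ZMod.isHamiltonian_of_forall_adj_add_one (by linarith [hq.two_le]) fun x => ?_
  have hne : x ≠ x + 1 := by simp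
  rcases ZMod.addOrderOf_dvd_or_addOrderOf_add_one_dvd q x with h | h
  · exact pcGraphAdd_adj_of_addOrderOf_dvd_prime hq h hne
  · exact (pcGraphAdd_adj_of_addOrderOf_dvd_prime hq h hne.symm).symm

/-- For distinct primes p < q, the prime coprime graph of ℤ/pqℤ is Hamiltonian iff p = 2. -/
theorem pcGraph_zmod_pq_hamiltonian_iff (p q : ℕ) (hp : p.Prime) (hq : q.Prime)
    (hpq : p < q) :
    haveI : NeZero (p * q) := ⟨Nat.mul_ne_zero hp.pos.ne' hq.pos.ne'⟩
    (pcGraphAdd (ZMod (p * q))).IsHamiltonian ↔ p = 2 := by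
  have : NeZero (p * q) := ⟨Nat.mul_ne_zero hp.pos.ne' hq.pos.ne'⟩
  refine ⟨fun hG => ?_, ?_⟩
  · by_contra hp₂
    have hp₃ : 3 ≤ p := by have := hp.two_le; omega
    have hpq₁ : p * q ≠ 1 := (one_lt_mul_iff.2 ⟨hp.pos, hq.pos, Or.inl hp.one_lt⟩).ne'
    exact pcGraphAdd_zmod_not_isHamiltonian_of_lt_two_mul_totient hpq₁
      (not_prime_mul hp.ne_one hq.ne_one) (mul_lt_two_mul_totient_mul hp hq hp₃ hpq) hG
  · rintro rfl
    exact pcGraphAdd_zmod_two_mul_isHamiltonian hq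
end

section
/- Let p and q be distinct primes, set n = pq and φ = (p−1)(q−1) (the Euler totient of n). The characteristic polynomial of the signless Laplacian matrix Q of the prime coprime graph Θ(D_n) of the dihedral group D_n of order 2n, viewed as a real matrix, equals (X − (2n−2))^{2n−φ−1} · (X − (2n−φ))^{φ−1} · (X² − 2(3n−φ−1)·X + ((3n−φ−1)² − (n² + 2φn − φ² − 2n + 1))). In particular, the eigenvalues of Q are 2(n−1) with multiplicity 2n−φ−1, 2n−φ with multiplicity φ−1, and 3n−φ−1 ± √(n² + 2φn − φ² − 2n + 1), each with multiplicity 1. -/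
open Polynomial

open Classical in
/-- The signless Laplacian matrix Q = D + A of a finite simple graph, as a real matrix. -/
noncomputable def signlessLaplacian (V : Type*) [Fintype V] (G : SimpleGraph V) :
    Matrix V V ℝ :=
  Matrix.of fun i j =>
    if i = j then (G.degree i : ℝ) else if G.Adj i j then 1 else 0

/-!
Every element of `D_{pq}` has order dividing `pq` or equal to `2`, so the gcd of two orders is `1`
or a prime unless both orders are `pq`. Hence `Θ(D_{pq})` is the complete split graph in which the
`φ(pq)` rotations of order `pq` form an independent set and all other pairs are adjacent. Its
signless Laplacian is a diagonal matrix plus a rank-two matrix, so for `x` different from the two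
diagonal values the matrix determinant lemma reduces `det (x - Q)` to a `2 × 2` determinant; both
sides of the claimed identity are polynomials agreeing at infinitely many points.
-/

open Finset Matrix Polynomial

lemma Nat.eq_one_or_prime_of_dvd_mul_of_ne {p q d : ℕ} (hp : p.Prime) (hq : q.Prime)
    (hd : d ∣ p * q) (hne : d ≠ p * q) : d = 1 ∨ d.Prime := by
  obtain ⟨d₁, d₂, h₁, h₂, rfl⟩ := Nat.dvd_mul.mp hd
  rcases hp.eq_one_or_self_of_dvd d₁ h₁ with rfl | rfl <;>
    rcases hq.eq_one_or_self_of_dvd d₂ h₂ with rfl | rfl <;> simp_all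

lemma Nat.eq_one_or_prime_of_dvd {g d : ℕ} (hg : g ∣ d) (hd : d = 1 ∨ d.Prime) :
    g = 1 ∨ g.Prime := by
  rcases hd with rfl | hd
  · exact .inl (Nat.dvd_one.mp hg)
  · exact (hd.eq_one_or_self_of_dvd g hg).imp_right fun h : g = d => h ▸ hd

namespace DihedralGroup

variable {n : ℕ}

lemma orderOf_dvd_or_eq_two (z : DihedralGroup n) : orderOf z ∣ n ∨ orderOf z = 2 := by
  cases z with
  | r i => exact .inl (orderOf_dvd_of_pow_eq_one (by simp [r_pow, ← r_zero]))
  | sr i => exact .inr (orderOf_sr i)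

lemma orderOf_eq_one_or_prime_of_ne {p q : ℕ} (hp : p.Prime) (hq : q.Prime)
    {z : DihedralGroup (p * q)} (hz : orderOf z ≠ p * q) :
    orderOf z = 1 ∨ (orderOf z).Prime :=
  (orderOf_dvd_or_eq_two z).elim (Nat.eq_one_or_prime_of_dvd_mul_of_ne hp hq · hz)
    fun h => .inr (h ▸ Nat.prime_two)

lemma orderOf_r_eq_addOrderOf [NeZero n] (i : ZMod n) : orderOf (r i) = addOrderOf i := by
  rw [orderOf_r, ← ZMod.addOrderOf_coe _ (NeZero.ne n), ZMod.natCast_zmod_val]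

lemma card_filter_orderOf_eq [NeZero n] (hn : n ≠ 2) :
    #{z : DihedralGroup n | orderOf z = n} = n.totient := by
  rw [← IsAddCyclic.card_addOrderOf_eq_totient (α := ZMod n) (ZMod.card n).symm.dvd, eq_comm]
  apply card_nbij r
  · intro i hi
    simpa [orderOf_r_eq_addOrderOf] using hi
  · intro i _ j _ h
    exact r.inj h
  · intro z hz
    cases z with
    | r i => exact ⟨i, by simpa [orderOf_r_eq_addOrderOf] using hz, rfl⟩
    | sr i => exact absurd (by simpa [orderOf_sr] using hz) hn.symm

end DihedralGroup

lemma pcGraph_dihedralGroup_adj_iff {p q : ℕ} (hp : p.Prime) (hq : q.Prime)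
    (x y : DihedralGroup (p * q)) :
    (pcGraph (DihedralGroup (p * q))).Adj x y ↔
      x ≠ y ∧ ¬(orderOf x = p * q ∧ orderOf y = p * q) := by
  refine and_congr_right fun _ => ⟨?_, fun h => ?_⟩
  · rintro h ⟨hx, hy⟩
    rw [hx, hy, Nat.gcd_self] at h
    exact h.elim (fun h => hp.ne_one (Nat.eq_one_of_mul_eq_one_right h))
      (Nat.not_prime_mul hp.ne_one hq.ne_one)
  · rcases not_and_or.mp h with hx | hy
    · exact Nat.eq_one_or_prime_of_dvd (Nat.gcd_dvd_left _ _)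
        (DihedralGroup.orderOf_eq_one_or_prime_of_ne hp hq hx)
    · exact Nat.eq_one_or_prime_of_dvd (Nat.gcd_dvd_right _ _)
        (DihedralGroup.orderOf_eq_one_or_prime_of_ne hp hq hy)

lemma Finset.sum_ite_eq_card_mul {R V : Type*} [NonAssocSemiring R] [Fintype V] (P : V → Prop)
    [DecidablePred P] (c₁ c₂ : R) :
    ∑ k, (if P k then c₁ else c₂) = #{k | P k} * c₁ + #{k | ¬P k} * c₂ := by
  rw [sum_ite, sum_const, sum_const, nsmul_eq_mul, nsmul_eq_mul]

namespace Matrix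

variable {K V : Type*} [Field K] [Fintype V] [DecidableEq V] (P : V → Prop) [DecidablePred P]

def completeSplit (a b : K) : Matrix V V K :=
  diagonal (fun i => if P i then b else a) + of fun i j => if P i ∧ P j then 0 else 1

lemma det_scalar_sub_completeSplit {a b x : K} (hxa : x ≠ a) (hxb : x ≠ b) :
    (scalar V x - completeSplit P a b).det =
      (x - a) ^ #{k | ¬P k} * (x - b) ^ #{k | P k} *
        (1 - #{k | ¬P k} / (x - a) * (1 + #{k | P k} / (x - b))) := by
  set d : V → K := fun i => if P i then x - b else x - a
  set u : V → K := fun i => if P i then 1 else 0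
  -- `U * W = u uᵀ - 𝟙 𝟙ᵀ`, the rank-two part of `x - completeSplit P a b`
  let U : Matrix V (Fin 2) K := of fun i => ![1, u i]
  let W : Matrix (Fin 2) V K := of ![fun _ => -1, u]
  have hd : ∀ i, d i ≠ 0 := fun i => by
    by_cases hi : P i <;> simp [d, hi, sub_ne_zero, hxa, hxb]
  have hsplit : scalar V x - completeSplit P a b = diagonal d + U * W := by
    ext i j
    by_cases hij : i = j
    · subst hij
      by_cases hi : P i <;> simp [completeSplit, U, W, d, u, mul_apply, hi]
      ring
    · by_cases hi : P i <;> by_cases hj : P j <;>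
        simp [completeSplit, U, W, d, u, mul_apply, hi, hj, hij]
  have hdinv : (diagonal d)⁻¹ = diagonal fun i => (d i)⁻¹ :=
    inv_eq_left_inv (by simp [diagonal_mul_diagonal, inv_mul_cancel₀ (hd _)])
  have hsmall : 1 + W * (diagonal d)⁻¹ * U =
      !![1 - (#{k | P k} / (x - b) + #{k | ¬P k} / (x - a)), -(#{k | P k} / (x - b));
        #{k | P k} / (x - b), 1 + #{k | P k} / (x - b)] := by
    ext r s
    rw [hdinv, Matrix.add_apply, mul_apply]
    simp only [mul_diagonal]
    fin_cases r <;> fin_cases s <;>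
      simp +contextual [U, W, d, u, apply_ite (·⁻¹), mul_ite, sum_ite_eq_card_mul] <;> ring
  rw [hsplit, det_add_mul _ _ (by simp [det_diagonal, prod_ne_zero_iff, hd]), hsmall,
    det_fin_two_of, det_diagonal]
  simp only [d, prod_ite, prod_const]
  ring

theorem charpoly_completeSplit [Infinite K] (a b : K) (hm : 0 < #{k | ¬P k})
    (hf : 0 < #{k | P k}) :
    (completeSplit P a b).charpoly =
      (X - C a) ^ (#{k | ¬P k} - 1) * (X - C b) ^ (#{k | P k} - 1) *
        ((X - C a) * (X - C b) - C (#{k | ¬P k} : K) * (X - C b + C (#{k | P k} : K))) := by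
  refine eq_of_infinite_eval_eq _ _ (((Set.finite_singleton b).insert a).infinite_compl.mono ?_)
  intro x hx
  simp only [Set.mem_compl_iff, Set.mem_insert_iff, Set.mem_singleton_iff, not_or] at hx
  have hxa : x - a ≠ 0 := sub_ne_zero.mpr hx.1
  have hxb : x - b ≠ 0 := sub_ne_zero.mpr hx.2
  rw [Set.mem_ofPred_eq, eval_charpoly, det_scalar_sub_completeSplit P hx.1 hx.2]
  simp only [eval_mul, eval_pow, eval_sub, eval_add, eval_X, eval_C]
  obtain ⟨m, hm⟩ := Nat.exists_eq_add_one_of_ne_zero hm.ne'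
  obtain ⟨f, hf⟩ := Nat.exists_eq_add_one_of_ne_zero hf.ne'
  rw [hm, hf, Nat.add_sub_cancel, Nat.add_sub_cancel]
  field_simp
  ring

end Matrix

section CompleteSplitGraph

variable {V : Type*} [Fintype V] [DecidableEq V] (P : V → Prop) [DecidablePred P]
  {G : SimpleGraph V}

lemma degree_eq_of_adj_iff (hG : ∀ x y, G.Adj x y ↔ x ≠ y ∧ ¬(P x ∧ P y)) (x : V)
    [Fintype (G.neighborSet x)] :
    G.degree x = if P x then #{y | ¬P y} else Fintype.card V - 1 := by
  rw [← G.card_neighborFinset_eq_degree]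
  split_ifs with hx
  · congr 1
    ext y
    simp only [SimpleGraph.mem_neighborFinset, hG, mem_filter, mem_univ, true_and, hx]
    exact and_iff_right_of_imp fun hy h => hy (h ▸ hx)
  · rw [← card_univ, ← card_erase_of_mem (mem_univ x)]
    congr 1
    ext y
    simp [hG, hx, eq_comm]

lemma signlessLaplacian_eq_completeSplit (hG : ∀ x y, G.Adj x y ↔ x ≠ y ∧ ¬(P x ∧ P y)) :
    signlessLaplacian V G = completeSplit P (Fintype.card V - 2 : ℝ) #{k | ¬P k} := by
  ext i j
  by_cases hij : i = j
  · subst hij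
    by_cases hi : P i
    · simp [signlessLaplacian, completeSplit, degree_eq_of_adj_iff P hG, hi]
    · have : 1 ≤ Fintype.card V := Fintype.card_pos_iff.mpr ⟨i⟩
      simp [signlessLaplacian, completeSplit, degree_eq_of_adj_iff P hG, hi, this]
      ring
  · by_cases hi : P i <;> simp [signlessLaplacian, completeSplit, hij, hG, hi]

theorem signlessLaplacian_charpoly_of_adj_iff
    (hG : ∀ x y, G.Adj x y ↔ x ≠ y ∧ ¬(P x ∧ P y))
    (hm : 0 < #{k | ¬P k}) (hf : 0 < #{k | P k}) :
    (signlessLaplacian V G).charpoly =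
      (X - C (Fintype.card V - 2 : ℝ)) ^ (#{k | ¬P k} - 1) *
        (X - C (#{k | ¬P k} : ℝ)) ^ (#{k | P k} - 1) *
        ((X - C (Fintype.card V - 2 : ℝ)) * (X - C (#{k | ¬P k} : ℝ)) -
          C (#{k | ¬P k} : ℝ) * (X - C (#{k | ¬P k} : ℝ) + C (#{k | P k} : ℝ))) := by
  rw [signlessLaplacian_eq_completeSplit P hG, charpoly_completeSplit P _ _ hm hf]

end CompleteSplitGraph

/-- The characteristic polynomial of the signless Laplacian of the prime coprime graph
of the dihedral group of order 2pq, for distinct primes p and q, with n = pq and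
φ = (p-1)(q-1) the Euler totient of n. -/
theorem pcGraph_dihedral_pq_signlessLaplacian_charpoly (p q : ℕ) (hp : p.Prime)
    (hq : q.Prime) (hpq : p ≠ q) :
    haveI : NeZero (p * q) := ⟨Nat.mul_ne_zero hp.pos.ne' hq.pos.ne'⟩
    let n : ℕ := p * q
    let φ : ℕ := (p - 1) * (q - 1)
    (signlessLaplacian (DihedralGroup n) (pcGraph (DihedralGroup n))).charpoly =
      (X - C (2 * (n : ℝ) - 2)) ^ (2 * n - φ - 1) *
      (X - C (2 * (n : ℝ) - φ)) ^ (φ - 1) *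
      (X ^ 2 - C (2 * (3 * (n : ℝ) - φ - 1)) * X +
        C ((3 * (n : ℝ) - φ - 1) ^ 2 -
          ((n : ℝ) ^ 2 + 2 * φ * n - (φ : ℝ) ^ 2 - 2 * n + 1))) := by
  have : NeZero (p * q) := ⟨Nat.mul_ne_zero hp.pos.ne' hq.pos.ne'⟩
  intro n φ
  have hφ_pos : 0 < φ :=
    Nat.mul_pos (Nat.sub_pos_of_lt hp.one_lt) (Nat.sub_pos_of_lt hq.one_lt)
  have hφ_lt : φ < 2 * n := by
    have := Nat.mul_le_mul (Nat.sub_le p 1) (Nat.sub_le q 1)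
    have := Nat.mul_pos hp.pos hq.pos
    omega
  have hcard : #{z : DihedralGroup n | orderOf z = n} = φ := by
    rw [DihedralGroup.card_filter_orderOf_eq, Nat.totient_mul ((Nat.coprime_primes hp hq).mpr hpq),
      Nat.totient_prime hp, Nat.totient_prime hq]
    exact fun h : p * q = 2 => Nat.not_prime_mul hp.ne_one hq.ne_one (h ▸ Nat.prime_two)
  have hcard_compl : #{z : DihedralGroup n | ¬orderOf z = n} = 2 * n - φ := by
    rw [filter_not, card_sdiff_of_subset (filter_subset _ _), hcard, card_univ, DihedralGroup.card]
  rw [signlessLaplacian_charpoly_of_adj_iff (fun z => orderOf z = n)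
      (pcGraph_dihedralGroup_adj_iff hp hq) (hcard_compl ▸ Nat.sub_pos_of_lt hφ_lt)
      (hcard ▸ hφ_pos),
    hcard, hcard_compl, DihedralGroup.card, Nat.cast_sub hφ_lt.le, Nat.cast_mul 2 n,
    Nat.cast_ofNat]
  congr 1
  simp only [map_sub, map_add, map_mul, map_pow, map_one, map_ofNat]
  ring
end

section
/- Let p be a prime. The characteristic polynomial of the signless Laplacian matrix Q of the prime coprime graph Θ(D_p) of the dihedral group D_p of order 2p, viewed as a real matrix, equals (X − (4p−2)) · (X − (2p−2))^{2p−1}; that is, the eigenvalues of Q are 2(2p−1) with multiplicity 1 and 2p−2 with multiplicity 2p−1. -/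
open Polynomial

/-!
Every element of `D_p` has order `1`, `2` or `p`, so the gcd of any two orders is `1` or a
prime and `Θ(D_p)` is the complete graph on `2p` vertices. Its signless Laplacian is
`(2p - 2) • 1 + J` with `J` the all-ones matrix; `J = 1 ⬝ 1ᵀ` has characteristic polynomial
`X ^ (n - 1) * (X - n)`, and the scalar shift moves every root by `2p - 2`.
-/

theorem Nat.gcd_eq_one_or_prime_of_prime_or_one {a : ℕ} (b : ℕ) (ha : a = 1 ∨ a.Prime) :
    Nat.gcd a b = 1 ∨ (Nat.gcd a b).Prime := by
  rcases ha with rfl | ha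
  · exact Or.inl (Nat.gcd_one_left b)
  · rcases ha.eq_one_or_self_of_dvd _ (Nat.gcd_dvd_left a b) with h | h
    · exact Or.inl h
    · exact Or.inr (by rwa [h])

theorem pcGraph_eq_top_of_forall_orderOf {G : Type*} [Group G]
    (h : ∀ g : G, orderOf g = 1 ∨ (orderOf g).Prime) : pcGraph G = ⊤ := by
  ext x y
  exact ⟨fun hxy => hxy.1, fun hxy => ⟨hxy, Nat.gcd_eq_one_or_prime_of_prime_or_one _ (h x)⟩⟩

theorem DihedralGroup.orderOf_eq_one_or_prime_s18 {p : ℕ} [NeZero p] (hp : p.Prime)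
    (g : DihedralGroup p) : orderOf g = 1 ∨ (orderOf g).Prime := by
  cases g with
  | r i =>
    rw [DihedralGroup.orderOf_r]
    rcases hp.eq_one_or_self_of_dvd _ (Nat.gcd_dvd_left p i.val) with h | h
    · exact Or.inr (by rwa [h, Nat.div_one])
    · exact Or.inl (by rw [h, Nat.div_self hp.pos])
  | sr i => exact Or.inr (DihedralGroup.orderOf_sr i ▸ Nat.prime_two)

theorem signlessLaplacian_top (V : Type*) [Fintype V] [DecidableEq V] :
    signlessLaplacian V ⊤ =
      Matrix.vecMulVec 1 1 + Matrix.scalar V ((Fintype.card V : ℝ) - 2) := by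
  ext i j
  by_cases hij : i = j
  · subst hij
    have hcard : 1 ≤ Fintype.card V := Fintype.card_pos_iff.2 ⟨i⟩
    -- `signlessLaplacian` counts degrees with a classically chosen `Fintype` instance
    have hdeg : ∀ [Fintype ((⊤ : SimpleGraph V).neighborSet i)],
        (⊤ : SimpleGraph V).degree i = Fintype.card V - 1 := by
      intro _
      convert SimpleGraph.complete_graph_degree i
    simp [signlessLaplacian, hdeg, Nat.cast_sub hcard]
    ring
  · simp [signlessLaplacian, hij]

theorem Matrix.charpoly_vecMulVec_one_add_scalar {n R : Type*} [Fintype n] [DecidableEq n]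
    [Nonempty n] [CommRing R] (a : R) :
    (vecMulVec 1 1 + scalar n a).charpoly =
      (X - C (a + Fintype.card n)) * (X - C a) ^ (Fintype.card n - 1) := by
  have hcard : Fintype.card n = Fintype.card n - 1 + 1 :=
    (Nat.sub_add_cancel Fintype.card_pos).symm
  have hshift : vecMulVec (1 : n → R) 1 + scalar n a = vecMulVec 1 1 - scalar n (-a) := by
    simp [sub_eq_add_neg]
  rw [hshift, charpoly_sub_scalar, charpoly_vecMulVec]
  conv_lhs => rw [hcard]
  simp [smul_eq_C_mul]
  ring

/-- The characteristic polynomial of the signless Laplacian of the prime coprime graph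
of the dihedral group of order 2p, for a prime p. -/
theorem pcGraph_dihedral_p_signlessLaplacian_charpoly (p : ℕ) (hp : p.Prime) :
    haveI : NeZero p := ⟨hp.pos.ne'⟩
    (signlessLaplacian (DihedralGroup p) (pcGraph (DihedralGroup p))).charpoly =
      (X - C (4 * (p : ℝ) - 2)) * (X - C (2 * (p : ℝ) - 2)) ^ (2 * p - 1) := by
  have : NeZero p := ⟨hp.pos.ne'⟩
  rw [pcGraph_eq_top_of_forall_orderOf (DihedralGroup.orderOf_eq_one_or_prime_s18 hp),
    signlessLaplacian_top, Matrix.charpoly_vecMulVec_one_add_scalar, DihedralGroup.card]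
  push_cast
  congr 3
  ring
end
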